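/- arXiv:1504.02387 — 4 statements merged into one kernel-verified Lean document; each statement's English description precedes it below -/
import Mathlib

section
/- In a standard monomial theory on a multiset with straightening relations for an algebra A, if every weakly standard monomial is standard and the ideal ℛ of relations (kernel of S(𝒜) → A) is homogeneous for the total degree of monomials, then ℛ is generated in degree two. -/
/-!
Straightening a non-standard monomial only produces strictly larger monomials, and up-sets
of the order are finite, so modulo any ideal that contains enough straightening relations
every monomial is congruent to a combination of standard monomials. These are linearly
independent in `A`, so such an ideal contained in the kernel is the whole kernel.

Relations of degree two suffice. When weakly standard monomials are standard, a monomial all of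
whose degree-two factors are standard has pairwise comparable factors, which can be ordered
into a chain because a tournament has a Hamiltonian path; so every non-standard monomial has a
non-standard factor of degree two. The straightening relation of that factor lies in the
kernel, and as the kernel is homogeneous, its components of degree other than two are kernel
elements supported on standard monomials, hence zero.
-/

open MvPolynomial

/-- The data of a (candidate) standard monomial theory on a multiset
`𝒜 = 𝒜₁ ⊔ ⋯ ⊔ 𝒜ₙ` of elements of a commutative `k`-algebra `A`:  a finite index
type `ι` (the multiset), a shape map to `Fin n`, a realization `elem : ι → A`, a
binary relation `⟵` which is transitive and antisymmetric on each shape, and swap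
maps on comparable pairs satisfying `φ_{i,i} = Id` and `φ_{i,j} φ_{j,i} = Id`. -/
structure SMTData (k A : Type) [Field k] [CommRing A] [Algebra k A] where
  ι : Type
  [fin : Fintype ι]
  [dec : DecidableEq ι]
  n : ℕ
  shape : ι → Fin n
  elem : ι → A
  rel : ι → ι → Prop
  rel_trans : ∀ {i j l}, shape i = shape j → shape j = shape l → rel i j → rel j l → rel i l
  rel_antisymm : ∀ {i j}, shape i = shape j → rel i j → rel j i → i = j
  swap : ∀ i j, rel i j → ι × ι
  swap_shape1 : ∀ i j h, shape (swap i j h).1 = shape j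
  swap_shape2 : ∀ i j h, shape (swap i j h).2 = shape i
  swap_rel : ∀ i j h, rel (swap i j h).1 (swap i j h).2
  swap_id : ∀ i j h, shape i = shape j → swap i j h = (i, j)
  swap_invol : ∀ i j h, swap (swap i j h).1 (swap i j h).2 (swap_rel i j h) = (i, j)

attribute [instance] SMTData.fin SMTData.dec

namespace SMTData

variable {k A : Type} [Field k] [CommRing A] [Algebra k A] (D : SMTData k A)

/-- A formal monomial (a list of elements of the multiset) is weakly standard if
`a₁ ⟵ a₂ ⟵ ⋯ ⟵ a_N`. -/
def WeaklyStandardList (l : List D.ι) : Prop := l.Chain' D.rel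

/-- One swap of an adjacent comparable pair inside a formal monomial. -/
def Step (l l' : List D.ι) : Prop :=
  ∃ (p q : List D.ι) (i j : D.ι) (h : D.rel i j),
    l = p ++ i :: j :: q ∧ l' = p ++ (D.swap i j h).1 :: (D.swap i j h).2 :: q

/-- A formal monomial is standard if its shape is non-decreasing and every
monomial obtained from it by repeatedly swapping adjacent comparable pairs is
weakly standard. -/
def StandardList (l : List D.ι) : Prop :=
  (l.map D.shape).Chain' (· ≤ ·) ∧
  ∀ l', Relation.ReflTransGen D.Step l l' → D.WeaklyStandardList l'

/-- The commutative monomial (exponent vector) associated with a formal monomial. -/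
noncomputable def toMon (l : List D.ι) : D.ι →₀ ℕ := Multiset.toFinsupp (↑l)

/-- A commutative monomial is standard if it is the image of a standard formal
monomial. -/
def StandardMon (m : D.ι →₀ ℕ) : Prop := ∃ l, D.StandardList l ∧ D.toMon l = m

/-- A formal monomial is minimally non-standard if it is not standard but every
proper subsequence of it is standard. -/
def MinNonStdList (l : List D.ι) : Prop :=
  ¬ D.StandardList l ∧ ∀ l', l'.Sublist l → l' ≠ l → D.StandardList l'

/-- A commutative monomial is minimally non-standard if it is the image of a
minimally non-standard formal monomial. -/
def MinNonStdMon (m : D.ι →₀ ℕ) : Prop := ∃ l, D.MinNonStdList l ∧ D.toMon l = m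

/-- The value in `A` of a commutative monomial in the elements of the multiset. -/
noncomputable def evalMon (m : D.ι →₀ ℕ) : A := m.prod fun i e => D.elem i ^ e

/-- The natural map from the symmetric algebra `S(𝒜)` (a polynomial ring on the
multiset) to `A`. -/
noncomputable def π : MvPolynomial D.ι k →ₐ[k] A := aeval D.elem

/-- The data form a standard monomial theory for `A` if the images in `A` of the
standard monomials are distinct and form a basis of `A` as a `k`-vector space
(both conditions are encoded by linear independence of the family together with
the spanning property). -/
def IsSMT : Prop :=
  LinearIndependent k (fun m : {m : D.ι →₀ ℕ // D.StandardMon m} => D.evalMon m.1) ∧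
  Submodule.span k (Set.range fun m : {m : D.ι →₀ ℕ // D.StandardMon m} => D.evalMon m.1) = ⊤

/-- An order on commutative monomials as in the abstract standard monomial theory:
a partial order, compatible with multiplication, with finite up-sets. -/
structure MonomialOrder (mle : (D.ι →₀ ℕ) → (D.ι →₀ ℕ) → Prop) : Prop where
  refl : ∀ m, mle m m
  trans : ∀ {m₁ m₂ m₃}, mle m₁ m₂ → mle m₂ m₃ → mle m₁ m₃
  antisymm : ∀ {m₁ m₂}, mle m₁ m₂ → mle m₂ m₁ → m₁ = m₂
  mul_compat : ∀ (m : D.ι →₀ ℕ) {m₁ m₂}, mle m₁ m₂ → mle (m + m₁) (m + m₂)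
  finite_up : ∀ m, {m' | mle m m'}.Finite

/-- `str` assigns to each non-standard monomial a straightening relation: it is
expressed in `A` as a linear combination of standard monomials `m` with `m' ≤ m`. -/
def IsStraightening (mle : (D.ι →₀ ℕ) → (D.ι →₀ ℕ) → Prop)
    (str : (D.ι →₀ ℕ) → ((D.ι →₀ ℕ) →₀ k)) : Prop :=
  ∀ m', ¬ D.StandardMon m' →
    (∀ m ∈ (str m').support, D.StandardMon m ∧ mle m' m) ∧
    D.evalMon m' = (str m').sum fun m c => c • D.evalMon m

/-- The element of the symmetric algebra encoding the straightening relation of a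
non-standard monomial `m'`. -/
noncomputable def relPoly (str : (D.ι →₀ ℕ) → ((D.ι →₀ ℕ) →₀ k)) (m' : D.ι →₀ ℕ) :
    MvPolynomial D.ι k :=
  monomial m' 1 - (str m').sum fun m c => monomial m c

end SMTData

namespace List

variable {α : Type} (r : α → α → Prop)

theorem exists_perm_cons_isChain {x : α} {c : List α} (hc : c.IsChain r)
    (hx : ∀ y ∈ c, r x y ∨ r y x) :
    ∃ d : List α, d.Perm (x :: c) ∧ d.IsChain r ∧ ∀ z ∈ d.head?, z = x ∨ z ∈ c.head? := by
  induction c with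
  | nil => exact ⟨[x], .refl _, isChain_singleton x, by simp⟩
  | cons y c ih =>
    rcases hx y mem_cons_self with hxy | hyx
    · exact ⟨x :: y :: c, .refl _, isChain_cons_cons.mpr ⟨hxy, hc⟩, by simp⟩
    · obtain ⟨d, hdp, hdc, hdh⟩ := ih hc.tail fun z hz => hx z (mem_cons_of_mem _ hz)
      refine ⟨y :: d, (hdp.cons y).trans (.swap x y c), isChain_cons.mpr ⟨?_, hdc⟩, by simp⟩
      intro z hz
      rcases hdh z hz with rfl | hz'
      · exact hyx
      · exact (isChain_cons.mp hc).1 z hz'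

theorem exists_perm_isChain (l : List α) (hl : ∀ a b, [a, b] <+~ l → r a b ∨ r b a) :
    ∃ c : List α, c.Perm l ∧ c.IsChain r := by
  induction l with
  | nil => exact ⟨[], .refl _, isChain_nil⟩
  | cons x t ih =>
    obtain ⟨c, hct, hc⟩ := ih fun a b hab => hl a b (hab.trans (sublist_cons_self x t).subperm)
    have hx : ∀ y ∈ c, r x y ∨ r y x := fun y hy =>
      hl x y ((subperm_cons x).mpr (singleton_subperm_iff.mpr (hct.subset hy)))
    obtain ⟨d, hdc, hd, -⟩ := exists_perm_cons_isChain r hc hx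
    exact ⟨d, hdc.trans (hct.cons x), hd⟩

end List

namespace SMTData

variable {k A : Type} [Field k] [CommRing A] [Algebra k A] (D : SMTData k A)

theorem toMon_le_toMon_iff {l l' : List D.ι} : D.toMon l ≤ D.toMon l' ↔ l.Subperm l' := by
  rw [← Multiset.coe_le, Multiset.le_iff_count]
  simp [toMon, Finsupp.le_def]

theorem toMon_eq_toMon_iff {l l' : List D.ι} : D.toMon l = D.toMon l' ↔ l.Perm l' :=
  Multiset.toFinsupp.injective.eq_iff.trans Multiset.coe_eq_coe

theorem exists_toMon_eq (m : D.ι →₀ ℕ) : ∃ l, D.toMon l = m :=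
  ⟨(Finsupp.toMultiset m).toList, by simp [toMon]⟩

theorem degree_toMon (l : List D.ι) : (D.toMon l).degree = l.length := by
  rw [← Multiset.coe_card, ← Multiset.toFinsupp_sum_eq]
  rfl

variable {D} {mle : (D.ι →₀ ℕ) → (D.ι →₀ ℕ) → Prop} {str : (D.ι →₀ ℕ) → ((D.ι →₀ ℕ) →₀ k)}

theorem standardMon_iff (hws : ∀ l, D.WeaklyStandardList l → D.StandardList l)
    (m : D.ι →₀ ℕ) : D.StandardMon m ↔ ∃ l : List D.ι, l.IsChain D.rel ∧ D.toMon l = m :=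
  ⟨fun ⟨l, hl, hm⟩ => ⟨l, hl.2 l .refl, hm⟩, fun ⟨l, hl, hm⟩ => ⟨l, hws l hl, hm⟩⟩

theorem exists_not_standardMon_pair_le (hws : ∀ l, D.WeaklyStandardList l → D.StandardList l)
    {m : D.ι →₀ ℕ} (hm : ¬ D.StandardMon m) :
    ∃ a b : D.ι, D.toMon [a, b] ≤ m ∧ ¬ D.StandardMon (D.toMon [a, b]) := by
  contrapose! hm
  obtain ⟨l, rfl⟩ := D.exists_toMon_eq m
  obtain ⟨c, hcl, hc⟩ := List.exists_perm_isChain D.rel l fun a b hab => by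
    obtain ⟨l₂, hl₂, hperm⟩ :=
      (standardMon_iff hws _).mp (hm a b (D.toMon_le_toMon_iff.mpr hab))
    rcases List.perm_pair.mp (D.toMon_eq_toMon_iff.mp hperm) with rfl | rfl
    · exact .inl (List.isChain_pair.mp hl₂)
    · exact .inr (List.isChain_pair.mp hl₂)
  exact (standardMon_iff hws _).mpr ⟨c, hc, D.toMon_eq_toMon_iff.mpr hcl⟩

theorem π_monomial (m : D.ι →₀ ℕ) (c : k) : D.π (monomial m c) = c • D.evalMon m := by
  rw [π, aeval_monomial, Algebra.smul_def]
  rfl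

theorem π_eq_sum (p : MvPolynomial D.ι k) :
    D.π p = ∑ m ∈ p.support, coeff m p • D.evalMon m := by
  conv_lhs => rw [p.as_sum]
  rw [map_sum]
  exact Finset.sum_congr rfl fun m _ => π_monomial m _

theorem eq_zero_of_mem_restrictSupport_of_π_eq_zero
    (hli : LinearIndepOn k D.evalMon {m | D.StandardMon m})
    {p : MvPolynomial D.ι k} (hp : p ∈ restrictSupport k {m | D.StandardMon m})
    (h : D.π p = 0) : p = 0 := by
  ext m
  rw [coeff_zero]
  by_cases hm : m ∈ p.support
  · exact linearIndepOn_iff'.mp hli p.support (coeff · p) hp (by rwa [← π_eq_sum]) m hm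
  · exact notMem_support_iff.mp hm

theorem coeff_relPoly (m' m : D.ι →₀ ℕ) :
    coeff m (D.relPoly str m') = (if m' = m then 1 else 0) - str m' m := by
  rw [relPoly, coeff_sub, coeff_monomial, Finsupp.sum, coeff_sum]
  simp only [coeff_monomial]
  rw [Finset.sum_ite_eq', ite_eq_left_iff.mpr fun hm => (Finsupp.notMem_support_iff.mp hm).symm]

theorem IsStraightening.relPoly_mem_ker (hstr : D.IsStraightening mle str) {m' : D.ι →₀ ℕ}
    (hm' : ¬ D.StandardMon m') : D.relPoly str m' ∈ RingHom.ker D.π := by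
  rw [RingHom.mem_ker, relPoly, map_sub, π_monomial, one_smul, map_finsuppSum,
    (hstr m' hm').2, sub_eq_zero]
  exact Finset.sum_congr rfl fun m _ => (π_monomial m _).symm

theorem isHomogeneous_of_mem_ker (hli : LinearIndepOn k D.evalMon {m | D.StandardMon m})
    (hhom : ∀ p ∈ RingHom.ker D.π, ∀ i : ℕ, homogeneousComponent i p ∈ RingHom.ker D.π)
    {p : MvPolynomial D.ι k} (hp : p ∈ RingHom.ker D.π) {n : ℕ}
    (hstd : ∀ m ∈ p.support, m.degree ≠ n → D.StandardMon m) : p.IsHomogeneous n := by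
  have hcomp : ∀ i ≠ n, homogeneousComponent i p = 0 := fun i hi =>
    eq_zero_of_mem_restrictSupport_of_π_eq_zero hli
      ((mem_restrictSupport_iff k).mpr fun m hm => by
        rw [Finset.mem_coe, support_homogeneousComponent, Finset.mem_filter] at hm
        exact hstd m hm.1 (hm.2 ▸ hi))
      (hhom p hp i)
  have hp_eq : homogeneousComponent n p = p := by
    ext m
    rw [coeff_homogeneousComponent]
    split_ifs with hm
    · rfl
    · simpa [coeff_homogeneousComponent] using (congr_arg (coeff m) (hcomp _ hm)).symm
  exact hp_eq ▸ homogeneousComponent_isHomogeneous n p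

theorem IsStraightening.relPoly_isHomogeneous (hstr : D.IsStraightening mle str)
    (hli : LinearIndepOn k D.evalMon {m | D.StandardMon m})
    (hhom : ∀ p ∈ RingHom.ker D.π, ∀ i : ℕ, homogeneousComponent i p ∈ RingHom.ker D.π)
    {m' : D.ι →₀ ℕ} (hm' : ¬ D.StandardMon m') :
    (D.relPoly str m').IsHomogeneous m'.degree := by
  refine isHomogeneous_of_mem_ker hli hhom (hstr.relPoly_mem_ker hm') fun m hm hdeg => ?_
  rw [mem_support_iff, coeff_relPoly, if_neg (by rintro rfl; exact hdeg rfl), zero_sub,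
    neg_ne_zero, ← Finsupp.mem_support_iff] at hm
  exact ((hstr m' hm').1 m hm).1

theorem MonomialOrder.wellFounded (hord : D.MonomialOrder mle) :
    WellFounded fun m₁ m₂ => mle m₂ m₁ ∧ m₁ ≠ m₂ :=
  (measure fun m => (hord.finite_up m).toFinset.card).wf.mono fun _ m₂ ⟨h₂₁, hne⟩ =>
    Finset.card_lt_card <| Set.Finite.toFinset_ssubset_toFinset.mpr
      ⟨fun _ hx => hord.trans h₂₁ hx,
        fun hsub => hne (hord.antisymm h₂₁ (hsub (hord.refl m₂))).symm⟩

theorem MonomialOrder.monomial_mem_sup_restrictSupport (hord : D.MonomialOrder mle)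
    (hstr : D.IsStraightening mle str) {J : Ideal (MvPolynomial D.ι k)}
    (hJ : ∀ m, ¬ D.StandardMon m → ∃ m₂ ≤ m, ¬ D.StandardMon m₂ ∧ D.relPoly str m₂ ∈ J)
    (m : D.ι →₀ ℕ) :
    monomial m 1 ∈ J.restrictScalars k ⊔ restrictSupport k {m | D.StandardMon m} := by
  induction m using hord.wellFounded.induction with
  | _ m ih =>
  by_cases hm : D.StandardMon m
  · refine Submodule.mem_sup_right ((mem_restrictSupport_iff k).mpr fun m' hm' => ?_)
    rwa [Finset.mem_singleton.mp (support_monomial_subset hm')]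
  obtain ⟨m₂, hle, hm₂, hJ₂⟩ := hJ m hm
  obtain ⟨r, rfl⟩ := le_iff_exists_add'.mp hle
  have hsplit : monomial (r + m₂) (1 : k) = monomial r 1 * D.relPoly str m₂ +
      ∑ m' ∈ (str m₂).support, str m₂ m' • monomial (r + m') 1 := by
    simp only [relPoly, mul_sub, monomial_mul, mul_one, Finsupp.sum, Finset.mul_sum, one_mul,
      smul_monomial, smul_eq_mul, sub_add_cancel]
  rw [hsplit]
  refine add_mem (Submodule.mem_sup_left (J.mul_mem_left _ hJ₂))
    (sum_mem fun m' hm' => Submodule.smul_mem _ _ (ih _ ?_))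
  obtain ⟨hm'std, hm'le⟩ := (hstr m₂ hm₂).1 m' hm'
  exact ⟨hord.mul_compat r hm'le, fun h => hm₂ (add_left_cancel h ▸ hm'std)⟩

theorem ker_π_le_of_monomial_mem_sup (hli : LinearIndepOn k D.evalMon {m | D.StandardMon m})
    {J : Ideal (MvPolynomial D.ι k)} (hJ : J ≤ RingHom.ker D.π)
    (hmon : ∀ m, monomial m 1 ∈ J.restrictScalars k ⊔ restrictSupport k {m | D.StandardMon m}) :
    RingHom.ker D.π ≤ J := by
  intro p hp
  have hsup : J.restrictScalars k ⊔ restrictSupport k {m | D.StandardMon m} = ⊤ := by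
    refine eq_top_iff.mpr ?_
    rw [← (basisMonomials D.ι k).span_eq, Submodule.span_le, coe_basisMonomials]
    rintro _ ⟨m, rfl⟩
    exact hmon m
  obtain ⟨j, hj, q, hq, rfl⟩ := Submodule.mem_sup.mp (hsup ▸ Submodule.mem_top : p ∈ _)
  have hq0 : q = 0 := eq_zero_of_mem_restrictSupport_of_π_eq_zero hli hq <| by
    rwa [RingHom.mem_ker, map_add, RingHom.mem_ker.mp (hJ hj), zero_add] at hp
  rwa [hq0, add_zero]

end SMTData

/-- **Corollary (generation in degree two).**
In a standard monomial theory on a multiset with straightening relations for an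
algebra `A`, if every weakly standard formal monomial is standard, and the ideal
`ℛ` of relations (the kernel of `S(𝒜) → A`) is homogeneous for the total degree
of monomials, then `ℛ` is generated in degree two, i.e. it is generated by its
homogeneous elements of degree `2`. -/
theorem kernel_generated_in_degree_two
    {k A : Type} [Field k] [CommRing A] [Algebra k A] (D : SMTData k A)
    (mle : (D.ι →₀ ℕ) → (D.ι →₀ ℕ) → Prop) (hord : D.MonomialOrder mle)
    (str : (D.ι →₀ ℕ) → ((D.ι →₀ ℕ) →₀ k))
    (hSMT : D.IsSMT) (hstr : D.IsStraightening mle str)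
    (hws : ∀ l : List D.ι, D.WeaklyStandardList l → D.StandardList l)
    (hhom : ∀ p ∈ RingHom.ker D.π, ∀ i : ℕ,
      MvPolynomial.homogeneousComponent i p ∈ RingHom.ker D.π) :
    RingHom.ker D.π =
      Ideal.span {p : MvPolynomial D.ι k |
        p ∈ RingHom.ker D.π ∧ p.IsHomogeneous 2} := by
  have hJ : Ideal.span {p | p ∈ RingHom.ker D.π ∧ p.IsHomogeneous 2} ≤ RingHom.ker D.π :=
    Ideal.span_le.mpr fun _ hp => hp.1
  refine le_antisymm (SMTData.ker_π_le_of_monomial_mem_sup hSMT.1 hJ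
    (hord.monomial_mem_sup_restrictSupport hstr fun m hm => ?_)) hJ
  obtain ⟨a, b, hle, hab⟩ := SMTData.exists_not_standardMon_pair_le hws hm
  refine ⟨_, hle, hab, Ideal.subset_span ⟨hstr.relPoly_mem_ker hab, ?_⟩⟩
  simpa [SMTData.degree_toMon] using hstr.relPoly_isHomogeneous hSMT.1 hhom hab
end

section
/- Let R ∈ T(k) and S ∈ T(h) be rows with R ⟵ S and k ≤ h. Then the set of subrows S' of S of shape k with R ⟵ S' has a minimum S⁰ with respect to ⟵, and the set of rows R' of shape h containing R with R' ⟵ S has a maximum R⁰ with respect to ⟵. Moreover R⁰ ⟵ S⁰ and R⁰ ∪ S⁰ = R ∪ S as multisets of entries. -/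
namespace Rows

/-- A row of shape `k` for the parameter `ℓ`: a strictly increasing list of
integers in `{1, …, ℓ+1}` (its shape is its length). -/
def IsRow (ℓ : ℕ) (R : List ℕ) : Prop :=
  R.Chain' (· < ·) ∧ ∀ x ∈ R, 1 ≤ x ∧ x ≤ ℓ + 1

/-- The relation `⟵` on rows: align the rows to the left if the first has shape
greater than or equal to that of the second, and to the right otherwise, and
require the entries in each common column to be non-decreasing. -/
def rowRel (R S : List ℕ) : Prop :=
  if S.length ≤ R.length then ∀ t < S.length, R.getD t 0 ≤ S.getD t 0
  else ∀ t < R.length, R.getD t 0 ≤ S.getD (S.length - R.length + t) 0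

/-- The characterization of the swap maps `φ_{k,h}(R,S) = (R⁰,S⁰)` on a
comparable pair `R ⟵ S` of rows of shapes `k, h`.  For `k ≤ h`: `S⁰` is the
`⟵`-minimal shape-`k` subrow of `S` with `R ⟵ S⁰` and `R⁰` is the `⟵`-maximal
shape-`h` row containing `R` with `R⁰ ⟵ S`; for `k ≥ h` the definitions are
dual. -/
def SwapSpec (ℓ : ℕ) (R S Rn Sn : List ℕ) : Prop :=
  if R.length ≤ S.length then
    (Sn.Sublist S ∧ Sn.length = R.length ∧ rowRel R Sn ∧
      ∀ S', S'.Sublist S → S'.length = R.length → rowRel R S' → rowRel Sn S') ∧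
    (R.Sublist Rn ∧ Rn.length = S.length ∧ IsRow ℓ Rn ∧ rowRel Rn S ∧
      ∀ R', R.Sublist R' → R'.length = S.length → IsRow ℓ R' → rowRel R' S → rowRel R' Rn)
  else
    (Rn.Sublist R ∧ Rn.length = S.length ∧ rowRel Rn S ∧
      ∀ R', R'.Sublist R → R'.length = S.length → rowRel R' S → rowRel R' Rn) ∧
    (S.Sublist Sn ∧ Sn.length = R.length ∧ IsRow ℓ Sn ∧ rowRel R Sn ∧
      ∀ S', S.Sublist S' → S'.length = R.length → IsRow ℓ S' → rowRel R S' → rowRel Sn S')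

/-- A tableau (a list of rows) is weakly standard if each row is `⟵`-less than
or equal to the next one. -/
def WeaklyStdTab (T : List (List ℕ)) : Prop := T.Chain' rowRel

/-- One application of a swap map to an adjacent comparable pair of rows of a
tableau. -/
def TabStep (ℓ : ℕ) (T T' : List (List ℕ)) : Prop :=
  ∃ p q R S Rn Sn, rowRel R S ∧ SwapSpec ℓ R S Rn Sn ∧
    T = p ++ R :: S :: q ∧ T' = p ++ Rn :: Sn :: q

/-- A tableau is standard if all tableaux obtained from it by repeatedly
applying swap maps to adjacent comparable pairs of rows are weakly standard. -/
def StdTab (ℓ : ℕ) (T : List (List ℕ)) : Prop :=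
  ∀ T', Relation.ReflTransGen (TabStep ℓ) T T' → WeaklyStdTab T'

end Rows

/-!
Both extremal rows come from one greedy scan of `S` from left to right: an entry `s` of `S` is
matched with the current first entry `r` of `R` when `r ≤ s`, and is otherwise passed over.
The matched entries form `S⁰` and the passed-over ones, merged with `R`, form `R⁰`, so
`R⁰ ∪ S⁰ = R ∪ S` by construction. Since `S` is sorted, any subrow `S'` dominating `R` can
be compared with the scan entry by entry, which gives minimality of `S⁰`; dually for `R⁰`.
Finally `R⁰ ⟵ S⁰` because a passed-over entry of `S` is at most every later entry of `S⁰`.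
-/

open List

namespace Rows

section Greedy

variable {α : Type*} [LinearOrder α]

def minSubrow : List α → List α → List α
  | [], _ => []
  | _ :: _, [] => []
  | r :: R, s :: S => if r ≤ s then s :: minSubrow R S else minSubrow (r :: R) S

def maxSuperrow : List α → List α → List α
  | [], S => S
  -- unreachable when `R ⟵ S`; chosen so that `maxSuperrow_append_minSubrow_perm` holds always
  | r :: R, [] => r :: R
  | r :: R, s :: S => if r ≤ s then r :: maxSuperrow R S else s :: maxSuperrow (r :: R) S

theorem minSubrow_sublist (R S : List α) : minSubrow R S <+ S := by
  induction R, S using minSubrow.induct with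
  | case1 S => simp [minSubrow]
  | case2 r R => simp [minSubrow]
  | case3 r R s S hrs ih => simpa [minSubrow, hrs] using ih.cons_cons s
  | case4 r R s S hrs ih => simpa [minSubrow, hrs] using ih.cons s

theorem sublist_maxSuperrow (R S : List α) : R <+ maxSuperrow R S := by
  induction R, S using minSubrow.induct with
  | case1 S => simp [maxSuperrow]
  | case2 r R => simp [maxSuperrow]
  | case3 r R s S hrs ih => simpa [maxSuperrow, hrs] using ih.cons_cons r
  | case4 r R s S hrs ih => simpa [maxSuperrow, hrs] using ih.cons s

theorem maxSuperrow_append_minSubrow_perm (R S : List α) :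
    maxSuperrow R S ++ minSubrow R S ~ R ++ S := by
  induction R, S using minSubrow.induct with
  | case1 S => simp [minSubrow, maxSuperrow]
  | case2 r R => simp [minSubrow, maxSuperrow]
  | case3 r R s S hrs ih =>
    simp only [minSubrow, maxSuperrow, if_pos hrs, cons_append]
    exact ((perm_middle.trans (ih.cons s)).trans perm_middle.symm).cons r
  | case4 r R s S hrs ih =>
    simp only [minSubrow, maxSuperrow, if_neg hrs, cons_append]
    exact (ih.cons s).trans perm_middle.symm

theorem mem_or_mem_of_mem_maxSuperrow {x : α} {R S : List α} (hx : x ∈ maxSuperrow R S) :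
    x ∈ R ∨ x ∈ S :=
  mem_append.1 <| (maxSuperrow_append_minSubrow_perm R S).subset (mem_append_left _ hx)

theorem pairwise_maxSuperrow {R S : List α} (hR : R.Pairwise (· < ·))
    (hS : S.Pairwise (· < ·)) : (maxSuperrow R S).Pairwise (· < ·) := by
  induction R, S using minSubrow.induct with
  | case1 S => simpa [maxSuperrow]
  | case2 r R => simpa [maxSuperrow] using hR
  | case3 r R s S hrs ih =>
    rw [pairwise_cons] at hR hS
    simp only [maxSuperrow, if_pos hrs, pairwise_cons]
    refine ⟨fun y hy => ?_, ih hR.2 hS.2⟩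
    rcases mem_or_mem_of_mem_maxSuperrow hy with hy | hy
    exacts [hR.1 y hy, hrs.trans_lt (hS.1 y hy)]
  | case4 r R s S hrs ih =>
    have hr := (pairwise_cons.1 hR).1
    rw [pairwise_cons] at hS
    simp only [maxSuperrow, if_neg hrs, pairwise_cons]
    refine ⟨fun y hy => ?_, ih hR hS.2⟩
    rcases mem_or_mem_of_mem_maxSuperrow hy with hy | hy
    · rcases mem_cons.1 hy with rfl | hy
      exacts [not_le.1 hrs, (not_le.1 hrs).trans (hr y hy)]
    · exact hS.1 y hy

-- For sorted `S` this is the right-aligned comparison `R ⟵ S` of a shorter row `R`.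
def FitsUnder (R S : List α) : Prop := ∃ S', S' <+ S ∧ Forall₂ (· ≤ ·) R S'

theorem not_fitsUnder_nil {r : α} {R : List α} : ¬ FitsUnder (r :: R) [] := by
  rintro ⟨S', hsub, hle⟩
  rw [eq_nil_of_sublist_nil hsub] at hle
  cases hle

theorem FitsUnder.of_cons_cons {r s : α} {R S : List α} (h : FitsUnder (r :: R) (s :: S)) :
    FitsUnder R S := by
  obtain ⟨S', hsub, hle⟩ := h
  obtain _ | @⟨_, _, _, S'', -, hle⟩ := hle
  exact ⟨S'', hsub.of_cons_cons, hle⟩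

theorem FitsUnder.of_not_le {r s : α} {R S : List α} (h : FitsUnder (r :: R) (s :: S))
    (hrs : ¬ r ≤ s) : FitsUnder (r :: R) S := by
  obtain ⟨S', hsub, hle⟩ := h
  cases hsub with
  | cons _ hsub => exact ⟨S', hsub, hle⟩
  | cons_cons _ hsub => exact absurd (forall₂_cons.1 hle).1 hrs

theorem FitsUnder.forall₂_minSubrow {R S : List α} (h : FitsUnder R S) :
    Forall₂ (· ≤ ·) R (minSubrow R S) := by
  induction R, S using minSubrow.induct with
  | case1 S => simp [minSubrow]
  | case2 r R => exact absurd h not_fitsUnder_nil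
  | case3 r R s S hrs ih => simpa [minSubrow, hrs] using ih h.of_cons_cons
  | case4 r R s S hrs ih => simpa [minSubrow, hrs] using ih (h.of_not_le hrs)

theorem FitsUnder.maxSuperrow_forall₂ {R S : List α} (h : FitsUnder R S) :
    Forall₂ (· ≤ ·) (maxSuperrow R S) S := by
  induction R, S using minSubrow.induct with
  | case1 S => simp [maxSuperrow, forall₂_same]
  | case2 r R => exact absurd h not_fitsUnder_nil
  | case3 r R s S hrs ih => simpa [maxSuperrow, hrs] using ih h.of_cons_cons
  | case4 r R s S hrs ih => simpa [maxSuperrow, hrs] using ih (h.of_not_le hrs)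

theorem minSubrow_forall₂_of_sublist {R S S' : List α} (hS : S.Pairwise (· ≤ ·))
    (hsub : S' <+ S) (hle : Forall₂ (· ≤ ·) R S') :
    Forall₂ (· ≤ ·) (minSubrow R S) S' := by
  induction R, S using minSubrow.induct generalizing S' with
  | case1 S =>
    cases hle
    simp [minSubrow]
  | case2 r R =>
    rw [eq_nil_of_sublist_nil hsub] at hle
    cases hle
  | case3 r R s S hrs ih =>
    obtain _ | @⟨_, x, _, S'', -, hle⟩ := hle
    rw [pairwise_cons] at hS
    simp only [minSubrow, if_pos hrs, forall₂_cons]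
    cases hsub with
    | cons _ hsub =>
      exact ⟨hS.1 x (hsub.subset mem_cons_self), ih hS.2 (sublist_of_cons_sublist hsub) hle⟩
    | cons_cons _ hsub => exact ⟨le_rfl, ih hS.2 hsub hle⟩
  | case4 r R s S hrs ih =>
    simp only [minSubrow, if_neg hrs]
    cases hsub with
    | cons _ hsub => exact ih (pairwise_cons.1 hS).2 hsub hle
    | cons_cons _ hsub => exact absurd (forall₂_cons.1 hle).1 hrs

theorem forall₂_maxSuperrow_of_sublist {R R' S : List α} (hR' : R'.Pairwise (· ≤ ·))
    (hsub : R <+ R') (hle : Forall₂ (· ≤ ·) R' S) :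
    Forall₂ (· ≤ ·) R' (maxSuperrow R S) := by
  induction R, S using minSubrow.induct generalizing R' with
  | case1 S => simpa [maxSuperrow]
  | case2 r R =>
    rw [forall₂_nil_right_iff.1 hle] at hsub
    simp at hsub
  | case3 r R s S hrs ih =>
    obtain _ | ⟨hxs, hle⟩ := hle
    rw [pairwise_cons] at hR'
    simp only [maxSuperrow, if_pos hrs, forall₂_cons]
    cases hsub with
    | cons _ hsub =>
      exact ⟨hR'.1 r (hsub.subset mem_cons_self), ih hR'.2 (sublist_of_cons_sublist hsub) hle⟩
    | cons_cons _ hsub => exact ⟨le_rfl, ih hR'.2 hsub hle⟩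
  | case4 r R s S hrs ih =>
    obtain _ | ⟨hxs, hle⟩ := hle
    simp only [maxSuperrow, if_neg hrs, forall₂_cons]
    cases hsub with
    | cons _ hsub => exact ⟨hxs, ih (pairwise_cons.1 hR').2 hsub hle⟩
    | cons_cons _ hsub => exact absurd hxs hrs

theorem forall₂_cons_dropLast {x y : α} {A B : List α} (hB : (y :: B).Pairwise (· ≤ ·))
    (hxy : x ≤ y) (h : Forall₂ (· ≤ ·) A (y :: B)) :
    Forall₂ (· ≤ ·) (x :: A.dropLast) (y :: B) := by
  induction B generalizing x y A with
  | nil =>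
    obtain ⟨a, A, -, hA, rfl⟩ := forall₂_cons_right_iff.1 h
    simpa [forall₂_nil_right_iff.1 hA] using hxy
  | cons b B ih =>
    obtain ⟨a, A, hay, hA, rfl⟩ := forall₂_cons_right_iff.1 h
    obtain ⟨a', A', -, -, rfl⟩ := forall₂_cons_right_iff.1 hA
    rw [pairwise_cons] at hB
    simpa [hxy] using ih hB.2 (hay.trans (hB.1 b mem_cons_self)) hA

theorem exists_prefix_maxSuperrow_forall₂_minSubrow {R S : List α}
    (hS : S.Pairwise (· ≤ ·)) :
    ∃ P, P <+: maxSuperrow R S ∧ Forall₂ (· ≤ ·) P (minSubrow R S) := by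
  induction R, S using minSubrow.induct with
  | case1 S => exact ⟨[], nil_prefix, by simp [minSubrow]⟩
  | case2 r R => exact ⟨[], nil_prefix, by simp [minSubrow]⟩
  | case3 r R s S hrs ih =>
    obtain ⟨P, hP, hle⟩ := ih (pairwise_cons.1 hS).2
    simp only [maxSuperrow, minSubrow, if_pos hrs]
    exact ⟨r :: P, (prefix_cons_inj r).2 hP, hle.cons hrs⟩
  | case4 r R s S hrs ih =>
    obtain ⟨P, hP, hle⟩ := ih (pairwise_cons.1 hS).2
    simp only [maxSuperrow, minSubrow, if_neg hrs]
    cases hS0 : minSubrow (r :: R) S with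
    | nil => exact ⟨[], nil_prefix, .nil⟩
    | cons y B =>
      rw [hS0] at hle
      have hyB : y :: B <+ S := hS0 ▸ minSubrow_sublist (r :: R) S
      rw [pairwise_cons] at hS
      exact ⟨s :: P.dropLast, (prefix_cons_inj s).2 ((dropLast_prefix P).trans hP),
        forall₂_cons_dropLast (hS.2.sublist hyB) (hS.1 y (hyB.subset mem_cons_self)) hle⟩

end Greedy

theorem IsRow.pairwise {ℓ : ℕ} {R : List ℕ} (hR : IsRow ℓ R) : R.Pairwise (· < ·) :=
  isChain_iff_pairwise.1 hR.1

theorem IsRow.maxSuperrow {ℓ : ℕ} {R S : List ℕ} (hR : IsRow ℓ R) (hS : IsRow ℓ S) :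
    IsRow ℓ (maxSuperrow R S) :=
  ⟨isChain_iff_pairwise.2 (pairwise_maxSuperrow hR.pairwise hS.pairwise),
    fun x hx => (mem_or_mem_of_mem_maxSuperrow hx).elim (hR.2 x) (hS.2 x)⟩

theorem rowRel_iff_forall₂_take {A B : List ℕ} (h : B.length ≤ A.length) :
    rowRel A B ↔ Forall₂ (· ≤ ·) (A.take B.length) B := by
  rw [rowRel, if_pos h, forall₂_iff_get]
  simp only [length_take, min_eq_left h, true_and, get_eq_getElem, getElem_take]
  constructor
  · intro hAB t ht _
    simpa [getD_eq_getElem, ht, ht.trans_le h] using hAB t ht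
  · intro hAB t ht
    simpa [getD_eq_getElem, ht, ht.trans_le h] using hAB t ht ht

theorem rowRel_iff_forall₂ {A B : List ℕ} (h : A.length = B.length) :
    rowRel A B ↔ Forall₂ (· ≤ ·) A B := by
  rw [rowRel_iff_forall₂_take h.ge, ← h, take_length]

theorem rowRel_of_prefix {A B P : List ℕ} (hP : P <+: A) (hPB : Forall₂ (· ≤ ·) P B) :
    rowRel A B := by
  have hlen : B.length ≤ A.length := hPB.length_eq ▸ hP.length_le
  rwa [rowRel_iff_forall₂_take hlen, ← hPB.length_eq, ← prefix_iff_eq_take.1 hP]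

theorem rowRel.fitsUnder {A B : List ℕ} (h : A.length ≤ B.length) (hAB : rowRel A B) :
    FitsUnder A B := by
  refine ⟨B.drop (B.length - A.length), drop_sublist _ _,
    forall₂_iff_get.2 ⟨by simp; omega, ?_⟩⟩
  intro t ht _
  have htB : B.length - A.length + t < B.length := by omega
  unfold rowRel at hAB
  split_ifs at hAB with hBA
  · have hd : B.length - A.length = 0 := by omega
    have htB' : t < B.length := by omega
    simpa [getD_eq_getElem, ht, htB', hd] using hAB t htB'
  · simpa [getD_eq_getElem, ht, htB] using hAB t ht

end Rows

open Rows in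
/-- **(Existence of the swaps.)**  Let `R ∈ T(k)` and `S ∈ T(h)` be rows with
`R ⟵ S` and `k ≤ h`.  Then the set of subrows `S'` of `S` of shape `k` with
`R ⟵ S'` has a `⟵`-minimum `S⁰`, the set of rows `R'` of shape `h` containing
`R` with `R' ⟵ S` has a `⟵`-maximum `R⁰`, and moreover `R⁰ ⟵ S⁰` and
`R⁰ ∪ S⁰ = R ∪ S` as multisets of entries. -/
theorem swap_exists (ℓ k h : ℕ) (R S : List ℕ)
    (hR : IsRow ℓ R) (hS : IsRow ℓ S) (hk : R.length = k) (hh : S.length = h)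
    (hkh : k ≤ h) (hRS : rowRel R S) :
    ∃ S0 R0 : List ℕ,
      -- S⁰ is the ⟵-minimum of the shape-k subrows S' of S with R ⟵ S'
      (S0.Sublist S ∧ S0.length = k ∧ rowRel R S0 ∧
        ∀ S', S'.Sublist S → S'.length = k → rowRel R S' → rowRel S0 S') ∧
      -- R⁰ is the ⟵-maximum of the shape-h rows R' containing R with R' ⟵ S
      (R.Sublist R0 ∧ R0.length = h ∧ IsRow ℓ R0 ∧ rowRel R0 S ∧
        ∀ R', R.Sublist R' → R'.length = h → IsRow ℓ R' → rowRel R' S → rowRel R' R0) ∧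
      -- R⁰ ⟵ S⁰
      rowRel R0 S0 ∧
      -- R⁰ ∪ S⁰ = R ∪ S with multiplicities
      (↑R0 + ↑S0 : Multiset ℕ) = ↑R + ↑S := by
  subst hk hh
  have hSle : S.Pairwise (· ≤ ·) := hS.pairwise.imp le_of_lt
  have hfit : FitsUnder R S := hRS.fitsUnder hkh
  have hR_S0 := hfit.forall₂_minSubrow
  have hR0_S := hfit.maxSuperrow_forall₂
  obtain ⟨P, hP, hP_S0⟩ := exists_prefix_maxSuperrow_forall₂_minSubrow (R := R) hSle
  refine ⟨minSubrow R S, maxSuperrow R S,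
    ⟨minSubrow_sublist R S, hR_S0.length_eq.symm, (rowRel_iff_forall₂ hR_S0.length_eq).2 hR_S0,
      fun S' hsub hlen hRS' => ?_⟩,
    ⟨sublist_maxSuperrow R S, hR0_S.length_eq, hR.maxSuperrow hS,
      (rowRel_iff_forall₂ hR0_S.length_eq).2 hR0_S, fun R' hsub hlen hR' hR'S => ?_⟩,
    rowRel_of_prefix hP hP_S0, ?_⟩
  · have hle := (rowRel_iff_forall₂ hlen.symm).1 hRS'
    exact (rowRel_iff_forall₂ (hR_S0.length_eq.symm.trans hlen.symm)).2
      (minSubrow_forall₂_of_sublist hSle hsub hle)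
  · have hle := (rowRel_iff_forall₂ hlen).1 hR'S
    exact (rowRel_iff_forall₂ (hlen.trans hR0_S.length_eq.symm)).2
      (forall₂_maxSuperrow_of_sublist (hR'.pairwise.imp le_of_lt) hsub hle)
  · rw [Multiset.coe_add, Multiset.coe_add, Multiset.coe_eq_coe]
    exact maxSuperrow_append_minSubrow_perm R S
end

section
/- With φ_{k,h}(R,S) = (R⁰,S⁰) defined for comparable pairs R ⟵ S of rows of shapes k and h, the swap maps satisfy φ_{k,k} = Id and φ_{h,k} ∘ φ_{k,h} = Id. -/
namespace Rows
open List

local infix:50 " ≼ " => Forall₂ (fun a b : ℕ => a ≤ b)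

theorem forall₂_le_trans {X Y Z : List ℕ} (h₁ : X ≼ Y) (h₂ : Y ≼ Z) : X ≼ Z := by
  induction h₁ generalizing Z with
  | nil => exact h₂
  | cons h _ ih =>
    obtain ⟨_, _, h', h₂', rfl⟩ := forall₂_cons_left_iff.mp h₂
    exact .cons (h.trans h') (ih h₂')

theorem forall₂_le_antisymm {X Y : List ℕ} (h₁ : X ≼ Y) (h₂ : Y ≼ X) : X = Y :=
  forall₂_eq_eq_eq ▸ h₁.mp (fun _ _ => le_antisymm) h₂.flip

theorem forall₂_le_iff_getD {X Y : List ℕ} (h : X.length = Y.length) :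
    X ≼ Y ↔ ∀ t < Y.length, X.getD t 0 ≤ Y.getD t 0 := by
  rw [forall₂_iff_get]
  simp only [h, true_and, List.get_eq_getElem, getD_eq_getElem?_getD]
  refine ⟨fun H t ht => ?_, fun H t h₁ h₂ => ?_⟩
  · have hX : t < X.length := h ▸ ht
    simpa [getElem?_eq_getElem ht, getElem?_eq_getElem hX] using H t ht ht
  · have hX : t < X.length := h ▸ h₂
    simpa [getElem?_eq_getElem hX, getElem?_eq_getElem h₂] using H t h₂

theorem rowRel_iff {X Y : List ℕ} :
    rowRel X Y ↔ X.take Y.length ≼ Y.drop (Y.length - X.length) := by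
  unfold rowRel
  split_ifs with h
  · rw [forall₂_le_iff_getD (by simp; omega)]
    simp +contextual [getD_eq_getElem?_getD, show Y.length - X.length = 0 by omega]
  · rw [forall₂_le_iff_getD (by simp; omega)]
    simp [getD_eq_getElem?_getD, take_of_length_le (by omega : X.length ≤ Y.length), getElem?_drop,
      show Y.length - (Y.length - X.length) = X.length by omega]

theorem rowRel_iff_of_length_le {X Y : List ℕ} (h : X.length ≤ Y.length) :
    rowRel X Y ↔ X ≼ Y.drop (Y.length - X.length) := by
  rw [rowRel_iff, take_of_length_le h]

theorem rowRel_iff_of_length_eq {X Y : List ℕ} (h : X.length = Y.length) :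
    rowRel X Y ↔ X ≼ Y := by
  rw [rowRel_iff_of_length_le h.le, h, Nat.sub_self, drop_zero]

theorem rowRel_antisymm {X Y : List ℕ} (h₁ : rowRel X Y) (h₂ : rowRel Y X)
    (h : X.length = Y.length) : X = Y :=
  forall₂_le_antisymm ((rowRel_iff_of_length_eq h).mp h₁) ((rowRel_iff_of_length_eq h.symm).mp h₂)

section IsRow

variable {ℓ : ℕ} {X Y : List ℕ}

theorem IsRow.pairwise_s7 (h : IsRow ℓ X) : X.Pairwise (· < ·) :=
  isChain_iff_pairwise.mp h.1

theorem IsRow.sublist (h : IsRow ℓ X) (hYX : Y <+ X) : IsRow ℓ Y :=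
  ⟨isChain_iff_pairwise.mpr (h.pairwise_s7.sublist hYX), fun y hy => h.2 y (hYX.subset hy)⟩

theorem IsRow.forall_le (h : IsRow ℓ X) : ∀ x ∈ X, x ≤ ℓ + 2 :=
  fun x hx => (h.2 x hx).2.trans (Nat.le_succ _)

end IsRow

def subrowsAbove (R S : List ℕ) : Set (List ℕ) :=
  {Y | Y <+ S ∧ Y.length = R.length ∧ rowRel R Y}

def subrowsBelow (R S : List ℕ) : Set (List ℕ) :=
  {Y | Y <+ R ∧ Y.length = S.length ∧ rowRel Y S}

def superrowsBelow (ℓ : ℕ) (R S : List ℕ) : Set (List ℕ) :=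
  {Y | R <+ Y ∧ Y.length = S.length ∧ IsRow ℓ Y ∧ rowRel Y S}

def superrowsAbove (ℓ : ℕ) (R S : List ℕ) : Set (List ℕ) :=
  {Y | S <+ Y ∧ Y.length = R.length ∧ IsRow ℓ Y ∧ rowRel R Y}

def IsRowLeast (s : Set (List ℕ)) (X : List ℕ) : Prop := X ∈ s ∧ ∀ Y ∈ s, rowRel X Y

def IsRowGreatest (s : Set (List ℕ)) (X : List ℕ) : Prop := X ∈ s ∧ ∀ Y ∈ s, rowRel Y X

section Extremal

variable {ℓ : ℕ} {R S X Rn Sn : List ℕ}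

theorem swapSpec_iff_of_le (h : R.length ≤ S.length) :
    SwapSpec ℓ R S Rn Sn ↔
      IsRowLeast (subrowsAbove R S) Sn ∧ IsRowGreatest (superrowsBelow ℓ R S) Rn := by
  simp only [SwapSpec, if_pos h, IsRowLeast, IsRowGreatest, subrowsAbove, superrowsBelow,
    Set.mem_ofPred_eq, and_imp, and_assoc]

theorem swapSpec_iff_of_lt (h : S.length < R.length) :
    SwapSpec ℓ R S Rn Sn ↔
      IsRowGreatest (subrowsBelow R S) Rn ∧ IsRowLeast (superrowsAbove ℓ R S) Sn := by
  simp only [SwapSpec, if_neg h.not_ge, IsRowLeast, IsRowGreatest, subrowsBelow, superrowsAbove,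
    Set.mem_ofPred_eq, and_imp, and_assoc]

theorem SwapSpec.length (h : SwapSpec ℓ R S Rn Sn) :
    Rn.length = S.length ∧ Sn.length = R.length := by
  rcases le_or_gt R.length S.length with hle | hlt
  · obtain ⟨⟨⟨-, hSn, -⟩, -⟩, ⟨⟨-, hRn, -⟩, -⟩⟩ := (swapSpec_iff_of_le hle).mp h
    exact ⟨hRn, hSn⟩
  · obtain ⟨⟨⟨-, hRn, -⟩, -⟩, ⟨⟨-, hSn, -⟩, -⟩⟩ := (swapSpec_iff_of_lt hlt).mp h
    exact ⟨hRn, hSn⟩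

theorem SwapSpec.isRow (hR : IsRow ℓ R) (hS : IsRow ℓ S) (h : SwapSpec ℓ R S Rn Sn) :
    IsRow ℓ Rn ∧ IsRow ℓ Sn := by
  rcases le_or_gt R.length S.length with hle | hlt
  · obtain ⟨⟨⟨hSnS, -⟩, -⟩, ⟨⟨-, -, hRn, -⟩, -⟩⟩ := (swapSpec_iff_of_le hle).mp h
    exact ⟨hRn, hS.sublist hSnS⟩
  · obtain ⟨⟨⟨hRnR, -⟩, -⟩, ⟨⟨-, -, hSn, -⟩, -⟩⟩ := (swapSpec_iff_of_lt hlt).mp h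
    exact ⟨hR.sublist hRnR, hSn⟩

theorem SwapSpec.eq_of_length_eq (h : SwapSpec ℓ R S Rn Sn) (hl : R.length = S.length) :
    Rn = R ∧ Sn = S := by
  obtain ⟨⟨⟨hSnS, hSn, -⟩, -⟩, ⟨⟨hRRn, hRn, -⟩, -⟩⟩ := (swapSpec_iff_of_le hl.le).mp h
  exact ⟨(hRRn.eq_of_length (hRn.trans hl.symm).symm).symm, hSnS.eq_of_length (hSn.trans hl)⟩

theorem IsRowLeast.unique {s : Set (List ℕ)} {X' : List ℕ} (h : IsRowLeast s X)
    (h' : IsRowLeast s X') (hl : X.length = X'.length) : X = X' :=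
  rowRel_antisymm (h.2 _ h'.1) (h'.2 _ h.1) hl

theorem IsRowGreatest.unique {s : Set (List ℕ)} {X' : List ℕ} (h : IsRowGreatest s X)
    (h' : IsRowGreatest s X') (hl : X.length = X'.length) : X = X' :=
  rowRel_antisymm (h'.2 _ h.1) (h.2 _ h'.1) hl

theorem SwapSpec.unique {Rn' Sn' : List ℕ} (h : SwapSpec ℓ R S Rn Sn)
    (h' : SwapSpec ℓ R S Rn' Sn') : Rn = Rn' ∧ Sn = Sn' := by
  have hRn := h.length.1.trans h'.length.1.symm
  have hSn := h.length.2.trans h'.length.2.symm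
  rcases le_or_gt R.length S.length with hle | hlt
  · rw [swapSpec_iff_of_le hle] at h h'
    exact ⟨h.2.unique h'.2 hRn, h.1.unique h'.1 hSn⟩
  · rw [swapSpec_iff_of_lt hlt] at h h'
    exact ⟨h.1.unique h'.1 hRn, h.2.unique h'.2 hSn⟩

end Extremal

/-- `(greedySwap L S).2` lists the entries of `S` matched to the entries of `L`, and
`(greedySwap L S).1` is `L` merged with the unmatched entries of `S`. -/
def greedySwap : List ℕ → List ℕ → List ℕ × List ℕ
  | L, [] => (L, [])
  | [], S => (S, [])
  | r :: L, s :: S =>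
    if r ≤ s then (r :: (greedySwap L S).1, s :: (greedySwap L S).2)
    else (s :: (greedySwap (r :: L) S).1, (greedySwap (r :: L) S).2)

theorem greedySwap_snd_sublist (L S : List ℕ) : (greedySwap L S).2 <+ S := by
  fun_induction greedySwap L S <;> simp_all

theorem sublist_greedySwap_fst (L S : List ℕ) : L <+ (greedySwap L S).1 := by
  fun_induction greedySwap L S <;> simp_all

theorem greedySwap_length_add (L S : List ℕ) :
    (greedySwap L S).1.length + (greedySwap L S).2.length = L.length + S.length := by
  fun_induction greedySwap L S <;> simp_all <;> omega

theorem greedySwap_fst_subset (L S : List ℕ) : (greedySwap L S).1 ⊆ L ++ S := by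
  fun_induction greedySwap L S <;> simp_all [subset_def] <;> grind

theorem greedySwap_snd_length_of_forall₂ {L S X : List ℕ} (hXS : X <+ S) (hLX : L ≼ X) :
    (greedySwap L S).2.length = L.length := by
  fun_induction greedySwap L S generalizing X with
  | case1 => simp_all
  | case2 => rfl
  | case3 r L s S hrs ih =>
    obtain ⟨x, X', -, hLX', rfl⟩ := forall₂_cons_left_iff.mp hLX
    rcases cons_sublist_cons'.mp hXS with hXS' | ⟨rfl, hXS'⟩
    · simpa using ih ((sublist_cons_self x X').trans hXS') hLX'
    · simpa using ih hXS' hLX'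
  | case4 r L s S hrs ih =>
    obtain ⟨x, X', hrx, -, rfl⟩ := forall₂_cons_left_iff.mp hLX
    rcases cons_sublist_cons'.mp hXS with hXS' | ⟨rfl, -⟩
    · exact ih hXS' hLX
    · exact absurd hrx hrs

theorem forall₂_greedySwap_snd {L S : List ℕ} (h : (greedySwap L S).2.length = L.length) :
    L ≼ (greedySwap L S).2 := by
  fun_induction greedySwap L S with
  | case1 L => simp [length_eq_zero_iff.mp h.symm]
  | case2 => simp
  | case3 r L s S hrs ih => exact .cons hrs (ih (by simpa using h))
  | case4 r L s S hrs ih => exact ih h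

theorem greedySwap_fst_forall₂ {L S : List ℕ} (h : (greedySwap L S).2.length = L.length) :
    (greedySwap L S).1 ≼ S := by
  fun_induction greedySwap L S with
  | case1 L => simp [length_eq_zero_iff.mp h.symm]
  | case2 S => exact forall₂_refl S
  | case3 r L s S hrs ih => exact .cons hrs (ih (by simpa using h))
  | case4 r L s S hrs ih => exact .cons le_rfl (ih h)

theorem greedySwap_snd_forall₂ {L S X : List ℕ} (hS : S.Pairwise (· < ·)) (hXS : X <+ S)
    (hLX : L ≼ X) : (greedySwap L S).2 ≼ X := by
  fun_induction greedySwap L S generalizing X with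
  | case1 L => simp_all
  | case2 S => simp_all
  | case3 r L s S hrs ih =>
    obtain ⟨x, X', -, hLX', rfl⟩ := forall₂_cons_left_iff.mp hLX
    obtain ⟨hs, hS'⟩ := pairwise_cons.mp hS
    rcases cons_sublist_cons'.mp hXS with hXS' | ⟨rfl, hXS'⟩
    · exact .cons (hs x (hXS'.subset mem_cons_self)).le
        (ih hS' ((sublist_cons_self x X').trans hXS') hLX')
    · exact .cons le_rfl (ih hS' hXS' hLX')
  | case4 r L s S hrs ih =>
    obtain ⟨x, X', hrx, -, rfl⟩ := forall₂_cons_left_iff.mp hLX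
    rcases cons_sublist_cons'.mp hXS with hXS' | ⟨rfl, -⟩
    · exact ih (pairwise_cons.mp hS).2 hXS' hLX
    · exact absurd hrx hrs

theorem forall₂_greedySwap_fst {L S Y : List ℕ} (hY : Y.Pairwise (· < ·)) (hLY : L <+ Y)
    (hYS : Y ≼ S) : Y ≼ (greedySwap L S).1 := by
  fun_induction greedySwap L S generalizing Y with
  | case1 L => simp_all
  | case2 S => exact hYS
  | case3 r L s S hrs ih =>
    obtain ⟨y, Y', -, hYS', rfl⟩ := forall₂_cons_right_iff.mp hYS
    obtain ⟨hy, hY'⟩ := pairwise_cons.mp hY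
    rcases cons_sublist_cons'.mp hLY with hLY' | ⟨rfl, hLY'⟩
    · exact .cons (hy r (hLY'.subset mem_cons_self)).le
        (ih hY' ((sublist_cons_self r L).trans hLY') hYS')
    · exact .cons le_rfl (ih hY' hLY' hYS')
  | case4 r L s S hrs ih =>
    obtain ⟨y, Y', hys, hYS', rfl⟩ := forall₂_cons_right_iff.mp hYS
    rcases cons_sublist_cons'.mp hLY with hLY' | ⟨rfl, -⟩
    · exact .cons hys (ih (pairwise_cons.mp hY).2 hLY' hYS')
    · exact absurd hys hrs

theorem pairwise_greedySwap_fst {L S : List ℕ} (hL : L.Pairwise (· < ·))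
    (hS : S.Pairwise (· < ·)) : (greedySwap L S).1.Pairwise (· < ·) := by
  fun_induction greedySwap L S with
  | case1 L => exact hL
  | case2 S => exact hS
  | case3 r L s S hrs ih =>
    obtain ⟨hr, hL'⟩ := pairwise_cons.mp hL
    obtain ⟨hs, hS'⟩ := pairwise_cons.mp hS
    refine pairwise_cons.mpr ⟨fun x hx => ?_, ih hL' hS'⟩
    rcases mem_append.mp (greedySwap_fst_subset L S hx) with hx | hx
    exacts [hr x hx, hrs.trans_lt (hs x hx)]
  | case4 r L s S hrs ih =>
    obtain ⟨hs, hS'⟩ := pairwise_cons.mp hS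
    refine pairwise_cons.mpr ⟨fun x hx => ?_, ih hL hS'⟩
    rcases mem_append.mp (greedySwap_fst_subset (r :: L) S hx) with hx | hx
    · rcases mem_cons.mp hx with rfl | hx
      exacts [not_le.mp hrs, (not_le.mp hrs).trans ((pairwise_cons.mp hL).1 x hx)]
    · exact hs x hx

@[simp] theorem greedySwap_nil_left (S : List ℕ) : greedySwap [] S = (S, []) := by
  cases S <;> rfl

theorem greedySwap_singleton_append {a b : ℕ} {Q : List ℕ} (hab : a ≤ b) (hQ : ∀ q ∈ Q, q < a) :
    greedySwap [a] (Q ++ [b]) = (Q ++ [a], [b]) := by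
  induction Q with
  | nil => simp [greedySwap, hab]
  | cons q Q ih =>
    simp only [forall_mem_cons] at hQ
    simp [greedySwap, not_le.mpr hQ.1, ih hQ.2]

theorem greedySwap_append_singleton {P Q : List ℕ} {a b : ℕ} (hab : a ≤ b)
    (h : ∀ x ∈ (greedySwap P Q).1, x < a) :
    greedySwap (P ++ [a]) (Q ++ [b]) = ((greedySwap P Q).1 ++ [a], (greedySwap P Q).2 ++ [b]) := by
  fun_induction greedySwap P Q with
  | case1 P =>
    cases P with
    | nil => simp [greedySwap, hab]
    | cons p P => simp_all [greedySwap, (h p (by simp)).le.trans hab]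
  | case2 Q => simpa using greedySwap_singleton_append hab h
  | case3 r L s S hrs ih => simp_all [greedySwap]
  | case4 r L s S hrs ih => simp_all [greedySwap]

theorem greedySwap_append_singleton_right {P Q : List ℕ} (v : ℕ)
    (h : (greedySwap P Q).2.length = P.length) :
    greedySwap P (Q ++ [v]) = ((greedySwap P Q).1 ++ [v], (greedySwap P Q).2) := by
  fun_induction greedySwap P Q with
  | case1 P => simp [length_eq_zero_iff.mp h.symm]
  | case2 Q => simp
  | case3 r L s S hrs ih => simp_all [greedySwap]
  | case4 r L s S hrs ih => simp_all [greedySwap]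

theorem forall₂_drop_of_sublist {Y S : List ℕ} (hS : S.Pairwise (· < ·)) (h : Y <+ S) :
    Y ≼ S.drop (S.length - Y.length) := by
  induction h with
  | slnil => simp
  | cons a h ih =>
    rw [length_cons, Nat.succ_sub h.length_le, drop_succ_cons]
    exact ih (pairwise_cons.mp hS).2
  | @cons_cons Y S a h ih =>
    obtain ⟨ha, hS'⟩ := pairwise_cons.mp hS
    simp only [length_cons, Nat.add_sub_add_right]
    rcases h.length_le.eq_or_lt with hl | hl
    · rw [h.eq_of_length hl, Nat.sub_self, drop_zero]
      exact forall₂_refl _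
    · obtain ⟨d, hd⟩ : ∃ d, S.length - Y.length = d + 1 :=
        ⟨_, (Nat.succ_pred_eq_of_pos (by omega)).symm⟩
      rw [hd, drop_succ_cons, drop_eq_getElem_cons (by omega)]
      refine .cons (ha _ (getElem_mem _)).le ?_
      simpa [hd] using ih hS'

theorem rowRel_iff_greedySwap_snd_length {L S : List ℕ} (hS : S.Pairwise (· < ·))
    (h : L.length ≤ S.length) : rowRel L S ↔ (greedySwap L S).2.length = L.length := by
  rw [rowRel_iff_of_length_le h]
  refine ⟨greedySwap_snd_length_of_forall₂ (drop_sublist _ _), fun hL => ?_⟩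
  have hsub := greedySwap_snd_sublist L S
  have := forall₂_le_trans (forall₂_greedySwap_snd hL) (forall₂_drop_of_sublist hS hsub)
  rwa [hL] at this

section GreedySpec

variable {ℓ : ℕ} {L S : List ℕ}

theorem isRow_greedySwap_fst (hL : IsRow ℓ L) (hS : IsRow ℓ S) : IsRow ℓ (greedySwap L S).1 :=
  ⟨isChain_iff_pairwise.mpr (pairwise_greedySwap_fst hL.pairwise_s7 hS.pairwise_s7), fun x hx =>
    (mem_append.mp (greedySwap_fst_subset L S hx)).elim (hL.2 x) (hS.2 x)⟩

theorem isRowLeast_greedySwap_snd (hS : S.Pairwise (· < ·))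
    (h : (greedySwap L S).2.length = L.length) :
    IsRowLeast (subrowsAbove L S) (greedySwap L S).2 := by
  refine ⟨⟨greedySwap_snd_sublist L S, h,
    (rowRel_iff_of_length_eq h.symm).mpr (forall₂_greedySwap_snd h)⟩, ?_⟩
  rintro Y ⟨hYS, hYL, hLY⟩
  rw [rowRel_iff_of_length_eq (h.trans hYL.symm)]
  exact greedySwap_snd_forall₂ hS hYS ((rowRel_iff_of_length_eq hYL.symm).mp hLY)

theorem isRowGreatest_greedySwap_fst (hL : IsRow ℓ L) (hS : IsRow ℓ S)
    (h : (greedySwap L S).2.length = L.length) :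
    IsRowGreatest (superrowsBelow ℓ L S) (greedySwap L S).1 := by
  have hlen : (greedySwap L S).1.length = S.length := by
    have := greedySwap_length_add L S
    omega
  refine ⟨⟨sublist_greedySwap_fst L S, hlen, isRow_greedySwap_fst hL hS,
    (rowRel_iff_of_length_eq hlen).mpr (greedySwap_fst_forall₂ h)⟩, ?_⟩
  rintro Y ⟨hLY, hYS, hY, hYrel⟩
  rw [rowRel_iff_of_length_eq (hYS.trans hlen.symm)]
  exact forall₂_greedySwap_fst hY.pairwise_s7 hLY ((rowRel_iff_of_length_eq hYS).mp hYrel)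

theorem swapSpec_greedySwap (hL : IsRow ℓ L) (hS : IsRow ℓ S)
    (h : (greedySwap L S).2.length = L.length) :
    SwapSpec ℓ L S (greedySwap L S).1 (greedySwap L S).2 :=
  (swapSpec_iff_of_le (h ▸ (greedySwap_snd_sublist L S).length_le)).mpr
    ⟨isRowLeast_greedySwap_snd hS.pairwise_s7 h, isRowGreatest_greedySwap_fst hL hS h⟩

end GreedySpec

/-- The reflection `x ↦ ℓ + 2 - x` maps `{1, …, ℓ + 1}` onto itself; reversing the row keeps it
increasing and exchanges the left and right alignments used by `rowRel`. -/
def dual (ℓ : ℕ) (X : List ℕ) : List ℕ := (X.map (ℓ + 2 - ·)).reverse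

section Dual

variable {ℓ : ℕ} {R S X Rn Sn : List ℕ}

@[simp] theorem dual_nil : dual ℓ [] = [] := rfl

theorem dual_cons (x : ℕ) (X : List ℕ) : dual ℓ (x :: X) = dual ℓ X ++ [ℓ + 2 - x] := by
  simp [dual]

@[simp] theorem length_dual (X : List ℕ) : (dual ℓ X).length = X.length := by
  simp [dual]

theorem mem_dual {x : ℕ} {X : List ℕ} : x ∈ dual ℓ X ↔ ∃ y ∈ X, ℓ + 2 - y = x := by
  simp [dual]

theorem le_of_mem_dual {x : ℕ} {X : List ℕ} (h : x ∈ dual ℓ X) : x ≤ ℓ + 2 := by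
  obtain ⟨y, -, rfl⟩ := mem_dual.mp h
  exact Nat.sub_le _ _

theorem dual_dual {X : List ℕ} (h : ∀ x ∈ X, x ≤ ℓ + 2) : dual ℓ (dual ℓ X) = X := by
  simp only [dual, map_reverse, reverse_reverse, map_map]
  refine (map_congr_left fun x hx => ?_).trans (map_id X)
  simp [Nat.sub_sub_self (h x hx)]

theorem IsRow.dual_dual {X : List ℕ} (h : IsRow ℓ X) : dual ℓ (dual ℓ X) = X :=
  Rows.dual_dual h.forall_le

theorem dual_dual_of_sublist_dual {X Y : List ℕ} (h : Y <+ dual ℓ X) : dual ℓ (dual ℓ Y) = Y :=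
  dual_dual fun _ hy => le_of_mem_dual (h.subset hy)

theorem dual_sublist_dual {X Y : List ℕ} (h : X <+ Y) : dual ℓ X <+ dual ℓ Y :=
  (h.map _).reverse

theorem dual_forall₂_dual {X Y : List ℕ} (h : X ≼ Y) : dual ℓ Y ≼ dual ℓ X := by
  unfold dual
  rw [forall₂_reverse_iff, forall₂_map_left_iff, forall₂_map_right_iff]
  exact h.flip.imp fun a b hab => Nat.sub_le_sub_left hab _

theorem take_dual (n : ℕ) (X : List ℕ) :
    (dual ℓ X).take n = dual ℓ (X.drop (X.length - n)) := by
  simp [dual, take_reverse, map_drop]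

theorem drop_dual (n : ℕ) (X : List ℕ) :
    (dual ℓ X).drop n = dual ℓ (X.take (X.length - n)) := by
  simp [dual, drop_reverse, map_take]

theorem rowRel_dual {X Y : List ℕ} (h : rowRel X Y) : rowRel (dual ℓ Y) (dual ℓ X) := by
  rw [rowRel_iff] at h ⊢
  rw [take_dual, drop_dual, length_dual, length_dual]
  refine dual_forall₂_dual ?_
  rwa [take_eq_take_iff.mpr (by omega : min (X.length - (X.length - Y.length)) X.length =
    min Y.length X.length)]

theorem IsRow.dual {X : List ℕ} (h : IsRow ℓ X) : IsRow ℓ (dual ℓ X) := by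
  obtain ⟨hc, hb⟩ := h
  refine ⟨isChain_iff_pairwise.mpr ?_, fun x hx => ?_⟩
  · rw [Rows.dual, pairwise_reverse, pairwise_map]
    refine (isChain_iff_pairwise.mp hc).imp_of_mem fun {a b} ha hb' hab => ?_
    have := hb b hb'
    omega
  · obtain ⟨y, hy, rfl⟩ := mem_dual.mp hx
    have := hb y hy
    omega

theorem IsRowLeast.dual {s t : Set (List ℕ)} (h : IsRowLeast s X)
    (hst : ∀ Y ∈ s, dual ℓ Y ∈ t) (hts : ∀ Y ∈ t, dual ℓ Y ∈ s)
    (ht : ∀ Y ∈ t, dual ℓ (dual ℓ Y) = Y) : IsRowGreatest t (dual ℓ X) :=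
  ⟨hst X h.1, fun Y hY => ht Y hY ▸ rowRel_dual (h.2 _ (hts Y hY))⟩

theorem IsRowGreatest.dual {s t : Set (List ℕ)} (h : IsRowGreatest s X)
    (hst : ∀ Y ∈ s, dual ℓ Y ∈ t) (hts : ∀ Y ∈ t, dual ℓ Y ∈ s)
    (ht : ∀ Y ∈ t, dual ℓ (dual ℓ Y) = Y) : IsRowLeast t (dual ℓ X) :=
  ⟨hst X h.1, fun Y hY => ht Y hY ▸ rowRel_dual (h.2 _ (hts Y hY))⟩

theorem dual_mem_subrowsBelow {Y : List ℕ} :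
    Y ∈ subrowsAbove R S → dual ℓ Y ∈ subrowsBelow (dual ℓ S) (dual ℓ R)
  | ⟨hYS, hY, hRY⟩ => ⟨dual_sublist_dual hYS, by simpa using hY, rowRel_dual hRY⟩

theorem dual_mem_subrowsAbove {Y : List ℕ} :
    Y ∈ subrowsBelow R S → dual ℓ Y ∈ subrowsAbove (dual ℓ S) (dual ℓ R)
  | ⟨hYR, hY, hYS⟩ => ⟨dual_sublist_dual hYR, by simpa using hY, rowRel_dual hYS⟩

theorem dual_mem_superrowsAbove {Y : List ℕ} :
    Y ∈ superrowsBelow ℓ R S → dual ℓ Y ∈ superrowsAbove ℓ (dual ℓ S) (dual ℓ R)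
  | ⟨hRY, hY, hYrow, hYS⟩ =>
    ⟨dual_sublist_dual hRY, by simpa using hY, hYrow.dual, rowRel_dual hYS⟩

theorem dual_mem_superrowsBelow {Y : List ℕ} :
    Y ∈ superrowsAbove ℓ R S → dual ℓ Y ∈ superrowsBelow ℓ (dual ℓ S) (dual ℓ R)
  | ⟨hSY, hY, hYrow, hRY⟩ =>
    ⟨dual_sublist_dual hSY, by simpa using hY, hYrow.dual, rowRel_dual hRY⟩

theorem SwapSpec.dual (hR : IsRow ℓ R) (hS : IsRow ℓ S) (hne : R.length ≠ S.length)
    (h : SwapSpec ℓ R S Rn Sn) : SwapSpec ℓ (dual ℓ S) (dual ℓ R) (dual ℓ Sn) (dual ℓ Rn) := by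
  rcases hne.lt_or_gt with hlt | hgt
  · rw [swapSpec_iff_of_le hlt.le] at h
    rw [swapSpec_iff_of_lt (by simpa using hlt)]
    refine ⟨h.1.dual (fun _ => dual_mem_subrowsBelow) (fun Y hY => ?_)
        (fun _ hY => dual_dual_of_sublist_dual hY.1),
      h.2.dual (fun _ => dual_mem_superrowsAbove) (fun Y hY => ?_)
        (fun _ ⟨_, _, hY, _⟩ => hY.dual_dual)⟩
    · simpa only [hR.dual_dual, hS.dual_dual] using dual_mem_subrowsAbove (ℓ := ℓ) hY
    · simpa only [hR.dual_dual, hS.dual_dual] using dual_mem_superrowsBelow hY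
  · rw [swapSpec_iff_of_lt hgt] at h
    rw [swapSpec_iff_of_le (by simpa using hgt.le)]
    refine ⟨h.1.dual (fun _ => dual_mem_subrowsAbove) (fun Y hY => ?_)
        (fun _ hY => dual_dual_of_sublist_dual hY.1),
      h.2.dual (fun _ => dual_mem_superrowsBelow) (fun Y hY => ?_)
        (fun _ ⟨_, _, hY, _⟩ => hY.dual_dual)⟩
    · simpa only [hR.dual_dual, hS.dual_dual] using dual_mem_subrowsBelow (ℓ := ℓ) hY
    · simpa only [hR.dual_dual, hS.dual_dual] using dual_mem_superrowsAbove hY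

theorem greedySwap_dual {L S : List ℕ} (hS : S.Pairwise (· < ·)) (hSb : ∀ x ∈ S, x ≤ ℓ + 2)
    (h : (greedySwap L S).2.length = L.length) :
    greedySwap (dual ℓ (greedySwap L S).2) (dual ℓ (greedySwap L S).1) = (dual ℓ S, dual ℓ L) := by
  fun_induction greedySwap L S with
  | case1 L => simp [length_eq_zero_iff.mp h.symm]
  | case2 S => simp
  | case3 r L s S hrs ih =>
    obtain ⟨hs, hS'⟩ := pairwise_cons.mp hS
    have ih := ih hS' (fun x hx => hSb x (mem_cons_of_mem _ hx)) (by simpa using h)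
    have hlt : ∀ x ∈ (greedySwap (dual ℓ (greedySwap L S).2) (dual ℓ (greedySwap L S).1)).1,
        x < ℓ + 2 - s := by
      rw [ih]
      intro x hx
      obtain ⟨y, hy, rfl⟩ := mem_dual.mp hx
      have := hs y hy
      have := hSb y (mem_cons_of_mem _ hy)
      omega
    rw [dual_cons s, dual_cons r, dual_cons s, dual_cons r,
      greedySwap_append_singleton (Nat.sub_le_sub_left hrs _) hlt, ih]
  | case4 r L s S hrs ih =>
    have ih := ih (pairwise_cons.mp hS).2 (fun x hx => hSb x (mem_cons_of_mem _ hx)) h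
    rw [dual_cons s, dual_cons s, greedySwap_append_singleton_right _ (by simp [ih, h]), ih]

end Dual

section Involution

variable {ℓ : ℕ} {R S Rn Sn : List ℕ}

theorem swapSpec_symm_of_lt (hR : IsRow ℓ R) (hS : IsRow ℓ S) (hRS : rowRel R S)
    (hlt : R.length < S.length) (h : SwapSpec ℓ R S Rn Sn) :
    rowRel Rn Sn ∧ SwapSpec ℓ Rn Sn R S := by
  have hfeas := (rowRel_iff_greedySwap_snd_length hS.pairwise_s7 hlt.le).mp hRS
  obtain ⟨rfl, rfl⟩ := h.unique (swapSpec_greedySwap hR hS hfeas)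
  obtain ⟨hRn, hSn⟩ := h.isRow hR hS
  obtain ⟨hlRn, hlSn⟩ := h.length
  have hinv := greedySwap_dual (ℓ := ℓ) hS.pairwise_s7 hS.forall_le hfeas
  have hfeas' : (greedySwap (dual ℓ (greedySwap R S).2) (dual ℓ (greedySwap R S).1)).2.length =
      (dual ℓ (greedySwap R S).2).length := by
    simp [hinv, hlSn]
  have hlt' : (dual ℓ (greedySwap R S).2).length < (dual ℓ (greedySwap R S).1).length := by
    simpa [hlRn, hlSn] using hlt
  have hrel := rowRel_dual (ℓ := ℓ)
    ((rowRel_iff_greedySwap_snd_length hRn.dual.pairwise_s7 hlt'.le).mpr hfeas')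
  have hspec := (hinv ▸ swapSpec_greedySwap hSn.dual hRn.dual hfeas').dual hSn.dual hRn.dual hlt'.ne
  rw [hRn.dual_dual, hSn.dual_dual] at hrel hspec
  rw [hR.dual_dual, hS.dual_dual] at hspec
  exact ⟨hrel, hspec⟩

theorem swapSpec_symm (hR : IsRow ℓ R) (hS : IsRow ℓ S) (hRS : rowRel R S)
    (h : SwapSpec ℓ R S Rn Sn) : rowRel Rn Sn ∧ SwapSpec ℓ Rn Sn R S := by
  rcases lt_trichotomy R.length S.length with hlt | heq | hgt
  · exact swapSpec_symm_of_lt hR hS hRS hlt h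
  · obtain ⟨rfl, rfl⟩ := h.eq_of_length_eq heq
    exact ⟨hRS, h⟩
  obtain ⟨hRn, hSn⟩ := h.isRow hR hS
  obtain ⟨hlRn, hlSn⟩ := h.length
  obtain ⟨hrel, hspec⟩ := swapSpec_symm_of_lt hS.dual hR.dual (rowRel_dual hRS)
    (by simpa using hgt) (h.dual hR hS hgt.ne')
  have hrel := rowRel_dual (ℓ := ℓ) hrel
  have hspec := hspec.dual hSn.dual hRn.dual (by simp only [length_dual]; omega)
  rw [hRn.dual_dual, hSn.dual_dual] at hrel hspec
  rw [hR.dual_dual, hS.dual_dual] at hspec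
  exact ⟨hrel, hspec⟩

end Involution

end Rows

open Rows in
/-- **(The swap maps are involutions.)**  With `φ_{k,h}(R,S) = (R⁰,S⁰)` defined
for comparable pairs `R ⟵ S` of rows (via the characterizing max/min
properties), the swap maps satisfy `φ_{k,k} = Id` and `φ_{h,k} ∘ φ_{k,h} = Id`. -/
theorem swap_involution (ℓ : ℕ)
    (φ : List ℕ → List ℕ → List ℕ × List ℕ)
    (hφ : ∀ R S, IsRow ℓ R → IsRow ℓ S → rowRel R S →
      SwapSpec ℓ R S (φ R S).1 (φ R S).2) :
    (∀ R S, IsRow ℓ R → IsRow ℓ S → rowRel R S → R.length = S.length →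
      φ R S = (R, S)) ∧
    (∀ R S, IsRow ℓ R → IsRow ℓ S → rowRel R S →
      φ (φ R S).1 (φ R S).2 = (R, S)) := by
  refine ⟨fun R S hR hS hRS hl => Prod.ext_iff.mpr ((hφ R S hR hS hRS).eq_of_length_eq hl),
    fun R S hR hS hRS => ?_⟩
  have hspec := hφ R S hR hS hRS
  obtain ⟨hRn, hSn⟩ := hspec.isRow hR hS
  obtain ⟨hrel, hspec'⟩ := swapSpec_symm hR hS hRS hspec
  exact Prod.ext_iff.mpr ((hφ _ _ hRn hSn hrel).unique hspec')
end

section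
/- For the multicone over SL₂ × SL₂ flag varieties with weights λ₁ = ω, λ₂ = ω+ω′, λ₃ = ω′, a tableau of rows of two boxes (each box filled with 1, 2, or empty, but not both empty) is standard if and only if, in each of the two columns, the sequence of integer entries read from top to bottom skipping empty boxes is non-decreasing. -/
namespace Boxes

/-- A box: empty (`none`), filled with `1` (`some false`) or filled with `2`
(`some true`). -/
abbrev Box := Option Bool

/-- The relation on boxes: `i ≤ j` for all pairs except `(i,j) = (2,1)`. -/
def boxLe (a b : Box) : Prop := ¬ (a = some true ∧ b = some false)

/-- A row consists of two boxes, not both empty. -/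
def IsRow2 (r : Box × Box) : Prop := r ≠ (none, none)

/-- The relation `⟵` on rows: the box relation in each of the two columns. -/
def rowRel2 (r s : Box × Box) : Prop := boxLe r.1 s.1 ∧ boxLe r.2 s.2

/-- The swap maps: vertically exchange the empty boxes with the filled ones;
pairs of rows of equal shape are left unchanged. -/
def swap2 : Box × Box → Box × Box → (Box × Box) × (Box × Box)
  | (some i, some j), (some k, none) => ((some i, none), (some k, some j))
  | (some i, none), (some k, some j) => ((some i, some j), (some k, none))
  | (none, some i), (some j, some k) => ((some j, some i), (none, some k))
  | (some j, some i), (none, some k) => ((none, some i), (some j, some k))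
  | (none, some i), (some j, none) => ((some j, none), (none, some i))
  | (some j, none), (none, some i) => ((none, some i), (some j, none))
  | r, s => (r, s)

/-- One application of a swap map to an adjacent comparable pair of rows. -/
def Step2 (T T' : List (Box × Box)) : Prop :=
  ∃ p q r s, rowRel2 r s ∧ T = p ++ r :: s :: q ∧
    T' = p ++ (swap2 r s).1 :: (swap2 r s).2 :: q

/-- A tableau is weakly standard if consecutive rows are comparable; it is
standard if all tableaux obtained from it by repeated adjacent swaps are weakly
standard. -/
def Std2 (T : List (Box × Box)) : Prop :=
  ∀ T', Relation.ReflTransGen Step2 T T' → T'.Chain' rowRel2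

end Boxes

/-!
A swap moves a filled box vertically past an empty box of the same column, so it never changes
the sequence of entries read down a column. Hence if both column sequences are non-decreasing,
no tableau reachable by swaps has a `2` directly above a `1`, and the tableau is standard.
Conversely, if a `2` lies above a `1` in the same column with only empty boxes in between, the
rows in between are filled in the other column, and swapping the `2` down one row at a time
brings it directly above the `1`, which is not weakly standard. The definitions are symmetric
under exchanging the two columns, so only the first column needs this argument.
-/

theorem List.IsChain.rel_of_filterMap {α β : Type*} {R : β → β → Prop} {f : α → Option β}
    {l l₁ l₂ : List α} {x y : α} (h : (l.filterMap f).IsChain R) (hl : l = l₁ ++ x :: y :: l₂) :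
    ∀ a ∈ f x, ∀ b ∈ f y, R a b := by
  intro a ha b hb
  rw [List.isChain_iff_forall_rel_of_append_cons_cons] at h
  exact h (l₁ := l₁.filterMap f) (l₂ := l₂.filterMap f)
    (by simp [hl, List.filterMap_append, Option.mem_def.mp ha, Option.mem_def.mp hb])

namespace Boxes

open Relation

theorem boxLe_iff {x y : Box} : boxLe x y ↔ ∀ a ∈ x, ∀ b ∈ y, a ≤ b := by
  rcases x with _ | _ | _ <;> rcases y with _ | _ | _ <;> simp [boxLe]

theorem rowRel2_swap {r s : Box × Box} : rowRel2 r.swap s.swap ↔ rowRel2 r s :=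
  and_comm

theorem isRow2_swap {r : Box × Box} : IsRow2 r.swap ↔ IsRow2 r := by
  simp [IsRow2, Prod.swap_eq_iff_eq_swap]

theorem swap2_swap (r s : Box × Box) :
    swap2 r.swap s.swap = ((swap2 r s).1.swap, (swap2 r s).2.swap) := by
  rcases r with ⟨_ | _, _ | _⟩ <;> rcases s with ⟨_ | _, _ | _⟩ <;> rfl

theorem filterMap_fst_swap2 (r s : Box × Box) :
    [(swap2 r s).1, (swap2 r s).2].filterMap Prod.fst = [r, s].filterMap Prod.fst := by
  rcases r with ⟨_ | _, _ | _⟩ <;> rcases s with ⟨_ | _, _ | _⟩ <;> rfl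

theorem filterMap_snd_swap2 (r s : Box × Box) :
    [(swap2 r s).1, (swap2 r s).2].filterMap Prod.snd = [r, s].filterMap Prod.snd := by
  rcases r with ⟨_ | _, _ | _⟩ <;> rcases s with ⟨_ | _, _ | _⟩ <;> rfl

theorem swap2_snd_fst (a : Bool) (b : Box) (k : Bool) :
    (swap2 (some a, b) (none, some k)).2.1 = some a := by
  cases b <;> rfl

theorem Step2.cons {T T' : List (Box × Box)} (r : Box × Box) (h : Step2 T T') :
    Step2 (r :: T) (r :: T') := by
  obtain ⟨p, q, a, b, hab, rfl, rfl⟩ := h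
  exact ⟨r :: p, q, a, b, hab, rfl, rfl⟩

theorem Step2.map_swap {T T' : List (Box × Box)} (h : Step2 T T') :
    Step2 (T.map Prod.swap) (T'.map Prod.swap) := by
  obtain ⟨p, q, r, s, hrs, rfl, rfl⟩ := h
  exact ⟨p.map Prod.swap, q.map Prod.swap, r.swap, s.swap, rowRel2_swap.mpr hrs, by simp,
    by simp [swap2_swap]⟩

theorem Step2.filterMap_eq {f : Box × Box → Box}
    (hf : ∀ r s, [(swap2 r s).1, (swap2 r s).2].filterMap f = [r, s].filterMap f)
    {T T' : List (Box × Box)} (h : Step2 T T') : T'.filterMap f = T.filterMap f := by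
  obtain ⟨p, q, r, s, -, rfl, rfl⟩ := h
  change (p ++ ([_, _] ++ q)).filterMap f = (p ++ ([r, s] ++ q)).filterMap f
  simp only [List.filterMap_append, hf]

theorem filterMap_eq_of_reflTransGen_step2 {f : Box × Box → Box}
    (hf : ∀ r s, [(swap2 r s).1, (swap2 r s).2].filterMap f = [r, s].filterMap f)
    {T T' : List (Box × Box)} (h : ReflTransGen Step2 T T') : T'.filterMap f = T.filterMap f := by
  induction h with
  | refl => rfl
  | tail _ hstep ih => rw [hstep.filterMap_eq hf, ih]

theorem isChain_rowRel2_of_columns {T : List (Box × Box)}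
    (h₁ : (T.filterMap Prod.fst).IsChain (· ≤ ·)) (h₂ : (T.filterMap Prod.snd).IsChain (· ≤ ·)) :
    T.IsChain rowRel2 := by
  rw [List.isChain_iff_forall_rel_of_append_cons_cons]
  intro r s l₁ l₂ hT
  exact ⟨boxLe_iff.mpr (h₁.rel_of_filterMap hT), boxLe_iff.mpr (h₂.rel_of_filterMap hT)⟩

theorem std2_of_columns {T : List (Box × Box)}
    (h₁ : (T.filterMap Prod.fst).IsChain (· ≤ ·)) (h₂ : (T.filterMap Prod.snd).IsChain (· ≤ ·)) :
    Std2 T := fun _ hT' =>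
  isChain_rowRel2_of_columns
    (by rwa [filterMap_eq_of_reflTransGen_step2 filterMap_fst_swap2 hT'])
    (by rwa [filterMap_eq_of_reflTransGen_step2 filterMap_snd_swap2 hT'])

namespace Std2

variable {T : List (Box × Box)}

theorem isChain (h : Std2 T) : T.IsChain rowRel2 :=
  h T .refl

theorem of_step2 {T' : List (Box × Box)} (h : Std2 T) (hs : Step2 T T') : Std2 T' :=
  fun _ hU => h _ (hU.head hs)

theorem tail {r : Box × Box} (h : Std2 (r :: T)) : Std2 T :=
  fun U hU => (h (r :: U) (hU.lift (r :: ·) fun _ _ => Step2.cons r)).tail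

theorem swap2_snd {r s : Box × Box} (h : Std2 (r :: s :: T)) : Std2 ((swap2 r s).2 :: T) :=
  (h.of_step2 ⟨[], T, r, s, (List.isChain_cons_cons.mp h.isChain).1, rfl, rfl⟩).tail

theorem map_swap (h : Std2 T) : Std2 (T.map Prod.swap) := by
  intro U hU
  have hTU : ReflTransGen Step2 T (U.map Prod.swap) := by
    simpa [Function.onFun] using hU.lift (List.map Prod.swap) fun _ _ => Step2.map_swap
  exact ((List.isChain_map _).mp (h _ hTU)).imp fun _ _ => rowRel2_swap.mp

theorem le_of_mem_head?_filterMap_fst (hT : ∀ u ∈ T, IsRow2 u) :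
    ∀ {r : Box × Box}, Std2 (r :: T) →
      ∀ a ∈ r.1, ∀ b ∈ (T.filterMap Prod.fst).head?, a ≤ b := by
  induction T with
  | nil => simp
  | cons u T ih =>
    rintro ⟨x, y⟩ h a (rfl : x = some a) b hb
    rcases u with ⟨_ | c, _ | k⟩
    · exact absurd rfl (hT _ List.mem_cons_self)
    · exact ih (fun u hu => hT u (.tail _ hu)) h.swap2_snd a (swap2_snd_fst a y k) b hb
    all_goals
      exact boxLe_iff.mp (List.isChain_cons_cons.mp h.isChain).1.1 a rfl b (by simpa using hb)

theorem isChain_filterMap_fst (hT : ∀ r ∈ T, IsRow2 r) (h : Std2 T) :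
    (T.filterMap Prod.fst).IsChain (· ≤ ·) := by
  induction T with
  | nil => exact .nil
  | cons r T ih =>
    have hT' : ∀ u ∈ T, IsRow2 u := fun u hu => hT u (.tail _ hu)
    rcases r with ⟨_ | a, y⟩
    · exact ih hT' h.tail
    · exact List.isChain_cons.mpr ⟨h.le_of_mem_head?_filterMap_fst hT' a rfl, ih hT' h.tail⟩

theorem isChain_filterMap_snd (hT : ∀ r ∈ T, IsRow2 r) (h : Std2 T) :
    (T.filterMap Prod.snd).IsChain (· ≤ ·) := by
  have hT' : ∀ r ∈ T.map Prod.swap, IsRow2 r := by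
    simpa only [List.forall_mem_map, isRow2_swap] using hT
  simpa [List.filterMap_map] using h.map_swap.isChain_filterMap_fst hT'

end Std2

end Boxes

open Boxes in
/-- For the multicone over `SL₂ × SL₂` flag varieties with weights
`λ₁ = ω, λ₂ = ω + ω′, λ₃ = ω′`, a tableau of rows of two boxes (each box filled
with `1`, `2` or empty, but not both empty) is standard if and only if, in each
of the two columns, the sequence of integer entries read from top to bottom
skipping the empty boxes is non-decreasing. -/
theorem standard_iff_columns_nondecreasing (T : List (Box × Box))
    (hT : ∀ r ∈ T, IsRow2 r) :
    Std2 T ↔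
      (T.filterMap (fun r => r.1)).Chain' (· ≤ ·) ∧
      (T.filterMap (fun r => r.2)).Chain' (· ≤ ·) := by
  exact ⟨fun h => ⟨h.isChain_filterMap_fst hT, h.isChain_filterMap_snd hT⟩,
    fun ⟨h₁, h₂⟩ => std2_of_columns h₁ h₂⟩
end
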